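/- (Regularity criterion for pencils, used via [bblr, Lemma 4.10] in the proof of Lemma 4.1) Let A₁, A₂ : V₀ → V₁ be ℂ-linear maps between c-dimensional ℂ-vector spaces. Then the matrix pencil A₁ + λA₂ is regular — i.e., there exist ν₁, ν₂ ∈ ℂ such that ν₁A₁ + ν₂A₂ is bijective — if and only if for every subspace S ⊆ V₀ one has dim(A₁(S) + A₂(S)) ≥ dim S. -/

import Mathlib

/-!
If `ν₁ A₁ + ν₂ A₂` is bijective, it maps `S` injectively into `A₁(S) + A₂(S)`.
Conversely, if no member of the pencil is bijective, then the matrices `M₁, M₂` of `A₁, A₂`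
satisfy `det (M₁ + a M₂) = 0` for every `a`, so the polynomial matrix `M₁ + X M₂` is singular
over `ℂ[X]` and has a nonzero kernel vector `v(X) = ∑ wᵢ Xⁱ`. Comparing coefficients gives
`A₁ w₀ = 0` and `A₁ wᵢ₊₁ = -A₂ wᵢ`, so on `S = span {wᵢ}` we get `A₂(S) ⊆ A₁(S)`,
while the first nonzero `w_k` lies in `ker A₁`; hence `dim (A₁(S) + A₂(S)) = dim A₁(S) < dim S`.
-/

open Module Polynomial Matrix

section Pencil

variable {K V₀ V₁ : Type*} [Field K] [AddCommGroup V₀] [Module K V₀]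
  [AddCommGroup V₁] [Module K V₁]

theorem Submodule.finrank_le_finrank_map_sup_map_of_injective [FiniteDimensional K V₁]
    {A₁ A₂ : V₀ →ₗ[K] V₁} {ν₁ ν₂ : K} (h : Function.Injective (ν₁ • A₁ + ν₂ • A₂))
    (S : Submodule K V₀) : finrank K S ≤ finrank K (S.map A₁ ⊔ S.map A₂ : Submodule K V₁) :=
  calc finrank K S = finrank K (S.map (ν₁ • A₁ + ν₂ • A₂)) :=
        (Submodule.equivMapOfInjective _ h S).finrank_eq
    _ ≤ _ := Submodule.finrank_mono <| (Submodule.map_add_le _ _ _).trans <|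
        sup_le_sup (Submodule.map_smul_le_map _ _ _) (Submodule.map_smul_le_map _ _ _)

theorem Submodule.finrank_map_lt_of_mem_ker [FiniteDimensional K V₀] {A : V₀ →ₗ[K] V₁}
    {S : Submodule K V₀} {x : V₀} (hxS : x ∈ S) (hx : x ≠ 0) (hAx : A x = 0) :
    finrank K (S.map A) < finrank K S := by
  have hker : 0 < finrank K (LinearMap.ker (A.domRestrict S)) :=
    Module.finrank_pos_iff_exists_ne_zero.2
      ⟨⟨⟨x, hxS⟩, hAx⟩, fun h ↦ hx (congrArg Subtype.val (congrArg Subtype.val h))⟩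
  have := LinearMap.finrank_range_add_finrank_ker (A.domRestrict S)
  rw [LinearMap.range_domRestrict] at this
  omega

/-- The relations satisfied by the coefficients `w i` of a polynomial solution
`v(X) = ∑ w i • Xⁱ` of `(A₁ + X A₂) v(X) = 0`. -/
def IsPencilChain (A₁ A₂ : V₀ →ₗ[K] V₁) (w : ℕ → V₀) : Prop :=
  A₁ (w 0) = 0 ∧ ∀ i, A₁ (w (i + 1)) + A₂ (w i) = 0

namespace IsPencilChain

variable {A₁ A₂ : V₀ →ₗ[K] V₁} {w : ℕ → V₀}

theorem exists_ne_zero_map_eq_zero (hw : IsPencilChain A₁ A₂ w) (hw0 : w ≠ 0) :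
    ∃ k, w k ≠ 0 ∧ A₁ (w k) = 0 := by
  classical
  have hex : ∃ k, w k ≠ 0 := Function.ne_iff.1 hw0
  refine ⟨Nat.find hex, Nat.find_spec hex, ?_⟩
  rcases h : Nat.find hex with _ | k
  · exact hw.1
  · have hk : w k = 0 := not_not.1 (Nat.find_min hex (by omega))
    simpa [hk] using hw.2 k

theorem map_span_le (hw : IsPencilChain A₁ A₂ w) :
    (Submodule.span K (Set.range w)).map A₂ ≤ (Submodule.span K (Set.range w)).map A₁ := by
  rw [Submodule.map_span, Submodule.map_span, Submodule.span_le]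
  rintro _ ⟨_, ⟨i, rfl⟩, rfl⟩
  rw [eq_neg_of_add_eq_zero_right (hw.2 i)]
  exact neg_mem (Submodule.subset_span ⟨w (i + 1), ⟨i + 1, rfl⟩, rfl⟩)

theorem finrank_map_sup_map_lt [FiniteDimensional K V₀] (hw : IsPencilChain A₁ A₂ w)
    (hw0 : w ≠ 0) :
    finrank K ((Submodule.span K (Set.range w)).map A₁ ⊔
      (Submodule.span K (Set.range w)).map A₂ : Submodule K V₁) <
      finrank K (Submodule.span K (Set.range w)) := by
  obtain ⟨k, hk, hAk⟩ := hw.exists_ne_zero_map_eq_zero hw0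
  rw [sup_eq_left.2 hw.map_span_le]
  exact Submodule.finrank_map_lt_of_mem_ker (Submodule.subset_span ⟨k, rfl⟩) hk hAk

theorem map {W₀ W₁ : Type*} [AddCommGroup W₀] [Module K W₀] [AddCommGroup W₁] [Module K W₁]
    {B₁ B₂ : W₀ →ₗ[K] W₁} {v : ℕ → W₀} (hv : IsPencilChain B₁ B₂ v) (f : W₀ →ₗ[K] V₀)
    (g : W₁ →ₗ[K] V₁) (h₁ : ∀ x, A₁ (f x) = g (B₁ x)) (h₂ : ∀ x, A₂ (f x) = g (B₂ x)) :
    IsPencilChain A₁ A₂ (f ∘ v) := by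
  refine ⟨?_, fun i ↦ ?_⟩
  · simp [h₁, hv.1]
  · simp [h₁, h₂, ← map_add, hv.2 i]

end IsPencilChain

end Pencil

namespace Matrix

variable {n K : Type*} [Fintype n] [Field K]

theorem coeff_map_C_mulVec (M : Matrix n n K) (v : n → K[X]) (i : ℕ) (r : n) :
    ((M.map C *ᵥ v) r).coeff i = (M *ᵥ fun j ↦ (v j).coeff i) r := by
  simp [mulVec, dotProduct, coeff_C_mul]

variable [DecidableEq n]

theorem det_map_C_add_X_smul_map_C_eq_zero [Infinite K] {M₁ M₂ : Matrix n n K}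
    (h : ∀ a : K, (M₁ + a • M₂).det = 0) : (M₁.map C + (X : K[X]) • M₂.map C).det = 0 := by
  refine zero_of_eval_zero _ fun a ↦ ?_
  have hmap : (evalRingHom a).mapMatrix (M₁.map C + (X : K[X]) • M₂.map C) = M₁ + a • M₂ := by
    ext i j
    simp only [RingHom.mapMatrix_apply, map_apply, add_apply, smul_apply, smul_eq_mul,
      coe_evalRingHom, eval_add, eval_mul, eval_C, eval_X]
  rw [← coe_evalRingHom, RingHom.map_det, hmap, h]

theorem exists_isPencilChain [Infinite K] {M₁ M₂ : Matrix n n K}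
    (h : ∀ a : K, (M₁ + a • M₂).det = 0) :
    ∃ w : ℕ → n → K, w ≠ 0 ∧ IsPencilChain M₁.mulVecLin M₂.mulVecLin w := by
  obtain ⟨v, hv, hNv⟩ := exists_mulVec_eq_zero_iff.2 (det_map_C_add_X_smul_map_C_eq_zero h)
  rw [add_mulVec, smul_mulVec] at hNv
  have hcoeff (r : n) (i : ℕ) :
      ((M₁.map C *ᵥ v + (X : K[X]) • (M₂.map C *ᵥ v)) r).coeff i = 0 := by
    rw [hNv]
    rfl
  refine ⟨fun i j ↦ (v j).coeff i, fun h0 ↦ hv ?_, ?_, fun i ↦ ?_⟩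
  · ext j i
    exact congrFun (congrFun h0 i) j
  · ext r
    simpa [coeff_map_C_mulVec] using hcoeff r 0
  · ext r
    simpa [coeff_map_C_mulVec, coeff_X_mul] using hcoeff r (i + 1)

end Matrix

namespace LinearMap

variable {K V₀ V₁ : Type*} [Field K] [AddCommGroup V₀] [Module K V₀]
  [AddCommGroup V₁] [Module K V₁]

theorem apply_equivFun_symm {m n : Type*} [Fintype m] [Fintype n] [DecidableEq n]
    (b₀ : Basis n K V₀) (b₁ : Basis m K V₁) (A : V₀ →ₗ[K] V₁) (y : n → K) :
    A (b₀.equivFun.symm y) = b₁.equivFun.symm (toMatrix b₀ b₁ A *ᵥ y) := by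
  apply b₁.equivFun.injective
  rw [LinearEquiv.apply_symm_apply, Basis.equivFun_apply, ← toMatrix_mulVec_repr b₀ b₁]
  congr 1
  exact b₀.equivFun.apply_symm_apply y

theorem exists_isPencilChain [FiniteDimensional K V₀] [FiniteDimensional K V₁] [Infinite K]
    (hrank : finrank K V₀ = finrank K V₁) {A₁ A₂ : V₀ →ₗ[K] V₁}
    (h : ∀ a : K, ¬ Function.Bijective (A₁ + a • A₂)) :
    ∃ w : ℕ → V₀, w ≠ 0 ∧ IsPencilChain A₁ A₂ w := by
  let b₀ := finBasis K V₀
  let b₁ := finBasisOfFinrankEq K V₁ hrank.symm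
  have hdet (a : K) : (toMatrix b₀ b₁ A₁ + a • toMatrix b₀ b₁ A₂).det = 0 := by
    by_contra hdet
    rw [← map_smul, ← map_add] at hdet
    exact h a (LinearEquiv.ofIsUnitDet (isUnit_iff_ne_zero.2 hdet)).bijective
  obtain ⟨w, hw0, hw⟩ := Matrix.exists_isPencilChain hdet
  refine ⟨b₀.equivFun.symm ∘ w, fun h0 ↦ hw0 ?_,
    hw.map _ _ (apply_equivFun_symm b₀ b₁ A₁) (apply_equivFun_symm b₀ b₁ A₂)⟩
  ext i : 1
  exact b₀.equivFun.symm.injective (by simpa using congrFun h0 i)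

end LinearMap

theorem stmt_8_general (c : ℕ)
    (V₀ V₁ : Type) [AddCommGroup V₀] [Module ℂ V₀] [FiniteDimensional ℂ V₀]
    [AddCommGroup V₁] [Module ℂ V₁] [FiniteDimensional ℂ V₁]
    (hV₀ : finrank ℂ V₀ = c) (hV₁ : finrank ℂ V₁ = c)
    (A₁ A₂ : V₀ →ₗ[ℂ] V₁) :
    (∃ ν₁ ν₂ : ℂ, Function.Bijective (ν₁ • A₁ + ν₂ • A₂))
    ↔
    (∀ S : Submodule ℂ V₀, finrank ℂ S ≤ finrank ℂ (S.map A₁ ⊔ S.map A₂ : Submodule ℂ V₁)) := by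
  refine ⟨fun ⟨_, _, h⟩ S ↦ S.finrank_le_finrank_map_sup_map_of_injective h.injective,
    fun hS ↦ ?_⟩
  by_contra hno
  obtain ⟨w, hw0, hw⟩ := LinearMap.exists_isPencilChain (A₁ := A₁) (A₂ := A₂)
    (hV₀.trans hV₁.symm) fun a hbij ↦ hno ⟨1, a, by rwa [one_smul]⟩
  exact (hw.finrank_map_sup_map_lt hw0).not_ge (hS _)

/-- (Regularity criterion for pencils, [bblr, Lemma 4.10]) For linear maps
A₁, A₂ : V₀ → V₁ between c-dimensional ℂ-vector spaces, the pencil A₁ + λA₂ is regular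
iff dim(A₁(S) + A₂(S)) ≥ dim S for every subspace S ⊆ V₀. -/
theorem stmt_8 (c : ℕ) (hc : 1 ≤ c)
    (V₀ V₁ : Type) [AddCommGroup V₀] [Module ℂ V₀] [FiniteDimensional ℂ V₀]
    [AddCommGroup V₁] [Module ℂ V₁] [FiniteDimensional ℂ V₁]
    (hV₀ : finrank ℂ V₀ = c) (hV₁ : finrank ℂ V₁ = c)
    (A₁ A₂ : V₀ →ₗ[ℂ] V₁) :
    (∃ ν₁ ν₂ : ℂ, Function.Bijective (ν₁ • A₁ + ν₂ • A₂))
    ↔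
    (∀ S : Submodule ℂ V₀, finrank ℂ S ≤ finrank ℂ (S.map A₁ ⊔ S.map A₂ : Submodule ℂ V₁)) :=
  stmt_8_general c V₀ V₁ hV₀ hV₁ A₁ A₂
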